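/- arXiv:2305.16102 — 2 statements merged into one kernel-verified Lean document; each statement's English description precedes it below -/
import Mathlib

section
/- Consider the attention-based GNN dynamics under assumptions (A1), (A2), (A3′) and (A4). Suppose in addition that there is a fixed connected undirected graph 𝒢′ on the vertex set {1,…,d} with a self-loop at every vertex such that for all t ≥ 0 and all i,j ∈ {1,…,d}: W^(t)_{ij} > 0 if and only if (i,j) is an edge of 𝒢′. Then all Nd entries of X^(t) converge to a single common value, i.e., lim_{t→∞} max_{i,k∈{1,…,N}, j,l∈{1,…,d}} |X^(t)_{ij} − X^(t)_{kl}| = 0. -/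
open Matrix Filter

noncomputable section

/-- Frobenius norm of a real matrix. -/
def frobNorm {N d : ℕ} (X : Matrix (Fin N) (Fin d) ℝ) : ℝ :=
  Real.sqrt (∑ i, ∑ j, (X i j) ^ 2)

/-- μ(X) = ‖X − 1γ_X‖_F where γ_X = (1/N)1ᵀX. -/
def gnnMu {N d : ℕ} (X : Matrix (Fin N) (Fin d) ℝ) : ℝ :=
  frobNorm (X - Matrix.of fun _i j => (∑ k, X k j) / N)

/-- Row-stochastic matrix. -/
def rowStochastic {N : ℕ} (P : Matrix (Fin N) (Fin N) ℝ) : Prop :=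
  (∀ i j, 0 ≤ P i j) ∧ ∀ i, ∑ j, P i j = 1

/-- The set 𝒫_{G,ε}. -/
def Pset {N : ℕ} (G : SimpleGraph (Fin N)) (ε : ℝ) : Set (Matrix (Fin N) (Fin N) ℝ) :=
  {P | rowStochastic P ∧ (∀ i j, G.Adj i j → ε ≤ P i j ∧ P i j ≤ 1) ∧
    ∀ i j, ¬ G.Adj i j → P i j = 0}

/-- The set 𝒟 of diagonal matrices with diagonal entries in [0,1]. -/
def Dset (N : ℕ) : Set (Matrix (Fin N) (Fin N) ℝ) :=
  {D | D.IsDiag ∧ ∀ i, 0 ≤ D i i ∧ D i i ≤ 1}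

/-- The set 𝒟_δ of diagonal matrices with diagonal entries in [0,δ]. -/
def DsetB (N : ℕ) (δ : ℝ) : Set (Matrix (Fin N) (Fin N) ℝ) :=
  {D | D.IsDiag ∧ ∀ i, 0 ≤ D i i ∧ D i i ≤ δ}

/-- The set ℳ_{G,ε} = {DP : D ∈ 𝒟, P ∈ 𝒫_{G,ε}}. -/
def Mset {N : ℕ} (G : SimpleGraph (Fin N)) (ε : ℝ) : Set (Matrix (Fin N) (Fin N) ℝ) :=
  {M | ∃ D ∈ Dset N, ∃ P ∈ Pset G ε, M = D * P}

/-- The set ℳ_{G,ε,δ} = {DP : D ∈ 𝒟_δ, P ∈ 𝒫_{G,ε}}. -/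
def MsetB {N : ℕ} (G : SimpleGraph (Fin N)) (ε δ : ℝ) : Set (Matrix (Fin N) (Fin N) ℝ) :=
  {M | ∃ D ∈ DsetB N δ, ∃ P ∈ Pset G ε, M = D * P}

/-- Backward product P^(t) P^(t-1) ⋯ P^(0). -/
def bprod {N : ℕ} (P : ℕ → Matrix (Fin N) (Fin N) ℝ) : ℕ → Matrix (Fin N) (Fin N) ℝ
  | 0 => P 0
  | t + 1 => P (t + 1) * bprod P t

/-- The orthogonal projection J = I − (1/N)11ᵀ onto the complement of span{1}. -/
def projJ (N : ℕ) : Matrix (Fin N) (Fin N) ℝ :=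
  1 - (N : ℝ)⁻¹ • Matrix.of fun _ _ => (1 : ℝ)

/-- Matrix ∞-norm: maximum absolute row sum. -/
def infNorm {N : ℕ} (M : Matrix (Fin N) (Fin N) ℝ) : ℝ :=
  ⨆ i, ∑ j, |M i j|

/-- Forward product of entrywise absolute values |W^(0)||W^(1)|⋯|W^(k)|. -/
def Wabs {d : ℕ} (W : ℕ → Matrix (Fin d) (Fin d) ℝ) : ℕ → Matrix (Fin d) (Fin d) ℝ
  | 0 => (W 0).map (fun x => |x|)
  | k + 1 => Wabs W k * (W (k + 1)).map (fun x => |x|)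

/-- Q̂_{t₀, t₀+k} = P^{t₀+k} D^{t₀+k-1} P^{t₀+k-1} ⋯ D^{t₀} P^{t₀}. -/
def Qhat {N : ℕ} (D P : ℕ → Matrix (Fin N) (Fin N) ℝ) (t₀ : ℕ) :
    ℕ → Matrix (Fin N) (Fin N) ℝ
  | 0 => P t₀
  | k + 1 => P (t₀ + k + 1) * D (t₀ + k) * Qhat D P t₀ k

/-- Q_{0,k} = D^(k) P^(k) ⋯ D^(0) P^(0). -/
def Qprod {N : ℕ} (D P : ℕ → Matrix (Fin N) (Fin N) ℝ) : ℕ → Matrix (Fin N) (Fin N) ℝ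
  | 0 => D 0 * P 0
  | k + 1 => D (k + 1) * P (k + 1) * Qprod D P k

/-- P^(m+k) P^(m+k-1) ⋯ P^(m). -/
def PprodFrom {N : ℕ} (P : ℕ → Matrix (Fin N) (Fin N) ℝ) (m : ℕ) :
    ℕ → Matrix (Fin N) (Fin N) ℝ
  | 0 => P m
  | k + 1 => P (m + k + 1) * PprodFrom P m k

/-- D^(m+k) P^(m+k) ⋯ D^(m) P^(m). -/
def QprodFrom {N : ℕ} (D P : ℕ → Matrix (Fin N) (Fin N) ℝ) (m : ℕ) :
    ℕ → Matrix (Fin N) (Fin N) ℝ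
  | 0 => D m * P m
  | k + 1 => D (m + k + 1) * P (m + k + 1) * QprodFrom D P m k

/-- Joint spectral radius of a set of square matrices (w.r.t. the Frobenius norm;
the value is independent of the chosen norm). -/
def JSR {n : ℕ} (A : Set (Matrix (Fin n) (Fin n) ℝ)) : ℝ :=
  Filter.limsup (fun k : ℕ =>
    sSup {x : ℝ | ∃ M : Fin k → Matrix (Fin n) (Fin n) ℝ,
      (∀ i, M i ∈ A) ∧ x = frobNorm (List.ofFn M).prod ^ (k : ℝ)⁻¹}) Filter.atTop

/-- Spectral radius of a real square matrix: max modulus of its complex eigenvalues. -/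
def specRad {n : ℕ} (M : Matrix (Fin n) (Fin n) ℝ) : ℝ :=
  sSup {r : ℝ | ∃ z ∈ spectrum ℂ (M.map Complex.ofReal), r = ‖z‖}

end

/-!
Entrywise `σ y = c * y` with `c ∈ [0, 1]`, so `vec X⁽ᵗ⁾` evolves by `u ↦ A u` with
`0 ≤ A ≤ (W⁽ᵗ⁾)ᵀ ⊗ P⁽ᵗ⁾`, a matrix with row sums at most `1`. Such matrices do not increase the
spread (maximum minus minimum) of the entries of `u` together with `0`; in particular the states
stay bounded, so by continuity of `Ψ` the attention weights on the edges of `G` are at least some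
`ε > 0`. Since `G` is connected and not bipartite and `𝒢′` is connected with positive diagonal, for
large `L` all entries of the `L`-step products of the `(W⁽ᵗ⁾)ᵀ ⊗ P⁽ᵗ⁾` are at least some `η > 0`.
Over such a window each row of the product of the `A`'s has either lost mass `η / 2` or all its
entries at least `η / 2`; either way the spread of `u` together with `0` drops by at least `η / 2`
times the spread of `u`. Being antitone and nonnegative it converges, so the spread of `u` tends
to `0`.
-/

open Finset Topology Relation Kronecker

section WindowProduct

variable {α β R : Type*} [Fintype α] [DecidableEq α] [Fintype β] [DecidableEq β]

/-- `windowProd A t k = A (t + k - 1) * ⋯ * A (t + 1) * A t`. -/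
def windowProd [Semiring R] (A : ℕ → Matrix α α R) (t : ℕ) : ℕ → Matrix α α R
  | 0 => 1
  | k + 1 => A (t + k) * windowProd A t k

theorem windowProd_mulVec [Semiring R] {A : ℕ → Matrix α α R} {u : ℕ → α → R}
    (hstep : ∀ t, u (t + 1) = A t *ᵥ u t) (t : ℕ) :
    ∀ k, u (t + k) = windowProd A t k *ᵥ u t
  | 0 => by simp [windowProd]
  | k + 1 => by rw [← add_assoc, hstep, windowProd_mulVec hstep t k, mulVec_mulVec]; rfl

theorem windowProd_kronecker [CommSemiring R] (A : ℕ → Matrix α α R) (B : ℕ → Matrix β β R)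
    (t : ℕ) : ∀ k, windowProd (fun τ => A τ ⊗ₖ B τ) t k = windowProd A t k ⊗ₖ windowProd B t k
  | 0 => (one_kronecker_one).symm
  | k + 1 => by
    simp only [windowProd]
    rw [windowProd_kronecker A B t k, mul_kronecker_mul]

variable {A B : ℕ → Matrix α α ℝ}

theorem windowProd_nonneg (hA0 : ∀ τ i j, 0 ≤ A τ i j) (t : ℕ) :
    ∀ k i j, 0 ≤ windowProd A t k i j
  | 0, i, j => by rw [windowProd, one_apply]; split_ifs <;> norm_num
  | k + 1, i, j => sum_nonneg fun m _ => mul_nonneg (hA0 _ i m) (windowProd_nonneg hA0 t k m j)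

theorem sum_windowProd_apply_le_one (hA0 : ∀ τ i j, 0 ≤ A τ i j)
    (hA1 : ∀ τ i, ∑ j, A τ i j ≤ 1) (t : ℕ) : ∀ k i, ∑ j, windowProd A t k i j ≤ 1
  | 0, i => by simp [windowProd, one_apply]
  | k + 1, i => by
    simp only [windowProd, mul_apply]
    rw [sum_comm]
    calc ∑ m, ∑ j, A (t + k) i m * windowProd A t k m j
        = ∑ m, A (t + k) i m * ∑ j, windowProd A t k m j := by simp only [mul_sum]
      _ ≤ ∑ m, A (t + k) i m * 1 := by
        gcongr with m
        · exact hA0 _ i m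
        · exact sum_windowProd_apply_le_one hA0 hA1 t k m
      _ ≤ 1 := by simpa using hA1 (t + k) i

theorem windowProd_apply_le_windowProd_apply (hA0 : ∀ τ i j, 0 ≤ A τ i j)
    (hAB : ∀ τ i j, A τ i j ≤ B τ i j) (t : ℕ) :
    ∀ k i j, windowProd A t k i j ≤ windowProd B t k i j
  | 0, _, _ => le_rfl
  | k + 1, i, j => sum_le_sum fun m _ =>
    mul_le_mul (hAB _ i m) (windowProd_apply_le_windowProd_apply hA0 hAB t k m j)
      (windowProd_nonneg hA0 t k m j) ((hA0 _ i m).trans (hAB _ i m))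

theorem pow_succ_le_windowProd_succ {ε : ℝ} (hA0 : ∀ τ i j, 0 ≤ A τ i j) (hε : 0 ≤ ε)
    {t k : ℕ} {i m j : α} (him : ε ≤ A (t + k) i m) (hmj : ε ^ k ≤ windowProd A t k m j) :
    ε ^ (k + 1) ≤ windowProd A t (k + 1) i j :=
  calc ε ^ (k + 1) = ε * ε ^ k := pow_succ' ε k
    _ ≤ A (t + k) i m * windowProd A t k m j := mul_le_mul him hmj (by positivity) (hA0 _ i m)
    _ ≤ windowProd A t (k + 1) i j :=
      single_le_sum (f := fun m => A (t + k) i m * windowProd A t k m j)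
        (fun m _ => mul_nonneg (hA0 _ i m) (windowProd_nonneg hA0 t k m j)) (mem_univ m)

theorem pow_length_le_windowProd {G : SimpleGraph α} {ε : ℝ} (hA0 : ∀ τ i j, 0 ≤ A τ i j)
    (hε : 0 ≤ ε) (hAG : ∀ τ i j, G.Adj i j → ε ≤ A τ i j) (t : ℕ) {i j : α} :
    ∀ w : G.Walk i j, ε ^ w.length ≤ windowProd A t w.length i j
  | .nil => by simp [windowProd]
  | .cons h w =>
    pow_succ_le_windowProd_succ hA0 hε (hAG _ _ _ h) (pow_length_le_windowProd hA0 hε hAG t w)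

theorem eventually_pow_le_windowProd {r : α → α → Prop} {ξ : ℝ} (hA0 : ∀ τ i j, 0 ≤ A τ i j)
    (hξ : 0 ≤ ξ) (hdiag : ∀ τ i, ξ ≤ A τ i i) (hAr : ∀ τ i j, r i j → ξ ≤ A τ i j) {i j : α}
    (hij : ReflTransGen r i j) : ∀ᶠ k in atTop, ∀ t, ξ ^ k ≤ windowProd A t k i j := by
  induction hij using ReflTransGen.head_induction_on with
  | refl =>
    refine .of_forall fun k t => ?_
    induction k with
    | zero => simp [windowProd]
    | succ k ih => exact pow_succ_le_windowProd_succ hA0 hξ (hdiag _ _) ih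
  | head him _ ih =>
    obtain ⟨n, hn⟩ := eventually_atTop.1 ih
    refine eventually_atTop.2 ⟨n + 1, fun k hk t => ?_⟩
    obtain ⟨k, rfl⟩ : ∃ k', k = k' + 1 := ⟨k - 1, by omega⟩
    exact pow_succ_le_windowProd_succ hA0 hξ (hAr _ _ _ him) (hn k (by omega) t)

end WindowProduct

section Spread

variable {ι : Type*} [Fintype ι]

theorem mulVec_apply_le_sub_of_le {B K : Matrix ι ι ℝ} {u : ι → ℝ} {a η : ℝ}
    (hB0 : ∀ p q, 0 ≤ B p q) (hBK : ∀ p q, B p q ≤ K p q) (hK : ∀ p, ∑ q, K p q ≤ 1)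
    (hKη : ∀ p q, η ≤ K p q) (hη : 0 ≤ η) (ha : 0 ≤ a) (hu : ∀ q, u q ≤ a) (p m : ι) :
    (B *ᵥ u) p ≤ a - η / 2 * (a - max (u m) 0) := by
  set ρ := ∑ q, B p q
  have hBu : (B *ᵥ u) p ≤ ρ * a - B p m * (a - u m) :=
    calc (B *ᵥ u) p = ρ * a - ∑ q, B p q * (a - u q) := by
          simp only [mulVec, dotProduct, ρ, mul_sub, sum_sub_distrib, sum_mul, sub_sub_cancel]
      _ ≤ ρ * a - B p m * (a - u m) := by
          gcongr
          exact single_le_sum (f := fun q => B p q * (a - u q))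
            (fun q _ => mul_nonneg (hB0 p q) (sub_nonneg.2 (hu q))) (mem_univ m)
  have hρ : ρ ≤ 1 := (sum_le_sum fun q _ => hBK p q).trans (hK p)
  have hmax : 0 ≤ η * max (u m) 0 := mul_nonneg hη (le_max_right _ _)
  rcases le_or_gt ρ (1 - η / 2) with hdamped | hlive
  · have := mul_le_mul_of_nonneg_right hdamped ha
    have := mul_nonneg (hB0 p m) (sub_nonneg.2 (hu m))
    linarith
  · -- row `p` of `K - B` has mass below `η / 2`, so `B p m ≥ K p m - η / 2 ≥ η / 2`
    have hBm : η / 2 ≤ B p m := by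
      have := single_le_sum (f := fun q => K p q - B p q)
        (fun q _ => sub_nonneg.2 (hBK p q)) (mem_univ m)
      rw [sum_sub_distrib] at this
      linarith [hKη p m, hK p]
    have := mul_le_mul_of_nonneg_right hρ ha
    have := mul_le_mul_of_nonneg_right hBm (sub_nonneg.2 (hu m))
    have := mul_nonneg hη (sub_nonneg.2 (le_max_left (u m) 0))
    linarith

theorem abs_mulVec_apply_le {B : Matrix ι ι ℝ} {u : ι → ℝ} {r : ℝ} (hB0 : ∀ p q, 0 ≤ B p q)
    (hB1 : ∀ p, ∑ q, B p q ≤ 1) (hu : ∀ q, |u q| ≤ r) (p : ι) : |(B *ᵥ u) p| ≤ r := by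
  have hr : 0 ≤ r := (abs_nonneg _).trans (hu p)
  have hle : ∀ v : ι → ℝ, (∀ q, v q ≤ r) → (B *ᵥ v) p ≤ r := fun v hv => by
    simpa using mulVec_apply_le_sub_of_le hB0 (fun _ _ => le_rfl) hB1 hB0 le_rfl hr hv p p
  have hneg := hle (-u) fun q => neg_le.1 (abs_le.1 (hu q)).1
  rw [mulVec_neg, Pi.neg_apply] at hneg
  exact abs_le.2 ⟨by linarith, hle u fun q => le_of_abs_le (hu q)⟩

theorem abs_apply_le_of_mulVec_step {A : ℕ → Matrix ι ι ℝ} {u : ℕ → ι → ℝ} {r : ℝ}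
    (hstep : ∀ t, u (t + 1) = A t *ᵥ u t) (hA0 : ∀ t p q, 0 ≤ A t p q)
    (hA1 : ∀ t p, ∑ q, A t p q ≤ 1) (h0 : ∀ p, |u 0 p| ≤ r) : ∀ t p, |u t p| ≤ r
  | 0 => h0
  | t + 1 => by
    rw [hstep]
    exact abs_mulVec_apply_le (hA0 t) (hA1 t) (abs_apply_le_of_mulVec_step hstep hA0 hA1 h0 t)

variable [Nonempty ι]

def spread (u : ι → ℝ) : ℝ :=
  univ.sup' univ_nonempty u - univ.inf' univ_nonempty u

/-- The spread of `u` together with the value `0`: unlike the spread itself, it does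
not grow under a nonnegative matrix with row sums at most `1`. -/
def spreadWithZero (u : ι → ℝ) : ℝ :=
  max (univ.sup' univ_nonempty u) 0 - min (univ.inf' univ_nonempty u) 0

theorem spread_nonneg (u : ι → ℝ) : 0 ≤ spread u :=
  sub_nonneg.2 ((inf'_le u (mem_univ (Classical.arbitrary ι))).trans (le_sup' u (mem_univ _)))

theorem spreadWithZero_nonneg (u : ι → ℝ) : 0 ≤ spreadWithZero u :=
  sub_nonneg.2 ((min_le_right _ _).trans (le_max_right _ _))

theorem spreadWithZero_mulVec_le {B K : Matrix ι ι ℝ} {u : ι → ℝ} {η : ℝ}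
    (hB0 : ∀ p q, 0 ≤ B p q) (hBK : ∀ p q, B p q ≤ K p q) (hK : ∀ p, ∑ q, K p q ≤ 1)
    (hKη : ∀ p q, η ≤ K p q) (hη : 0 ≤ η) :
    spreadWithZero (B *ᵥ u) ≤ spreadWithZero u - η / 2 * spread u := by
  obtain ⟨m, -, hm⟩ := exists_mem_eq_inf' univ_nonempty u
  obtain ⟨m', -, hm'⟩ := exists_mem_eq_sup' univ_nonempty u
  have hη1 : η ≤ 1 := (hKη m m).trans <|
    (single_le_sum (fun q _ => hη.trans (hKη m q)) (mem_univ m)).trans (hK m)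
  unfold spreadWithZero spread
  set s := univ.sup' univ_nonempty u
  set i := univ.inf' univ_nonempty u
  have his : i ≤ s := hm ▸ le_sup' u (mem_univ m)
  have hup : ∀ p, (B *ᵥ u) p ≤ max s 0 - η / 2 * (max s 0 - max i 0) := fun p => by
    simpa [hm] using mulVec_apply_le_sub_of_le hB0 hBK hK hKη hη (le_max_right s 0)
      (fun q => (le_sup' u (mem_univ q)).trans (le_max_left _ _)) p m
  have hlow : ∀ p, min i 0 + η / 2 * (min s 0 - min i 0) ≤ (B *ᵥ u) p := fun p => by
    have := mulVec_apply_le_sub_of_le (u := -u) hB0 hBK hK hKη hη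
      (neg_nonneg.2 (min_le_right i 0))
      (fun q => neg_le_neg ((min_le_left _ _).trans (inf'_le u (mem_univ q)))) p m'
    rw [mulVec_neg, Pi.neg_apply, Pi.neg_apply, ← hm', ← neg_zero, max_neg_neg, neg_zero] at this
    linarith
  have hgap : 0 ≤ max s 0 - max i 0 := sub_nonneg.2 (max_le_max_right 0 his)
  have hgap' : 0 ≤ min s 0 - min i 0 := sub_nonneg.2 (min_le_min_right 0 his)
  have hηgap := mul_le_mul_of_nonneg_right (show η / 2 ≤ 1 by linarith) hgap
  have hηgap' := mul_le_mul_of_nonneg_right (show η / 2 ≤ 1 by linarith) hgap'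
  have hmax : max (univ.sup' univ_nonempty (B *ᵥ u)) 0
      ≤ max s 0 - η / 2 * (max s 0 - max i 0) :=
    max_le (sup'_le _ _ fun p _ => hup p) (by linarith [le_max_right i 0])
  have hmin : min i 0 + η / 2 * (min s 0 - min i 0)
      ≤ min (univ.inf' univ_nonempty (B *ᵥ u)) 0 :=
    le_min (le_inf' _ _ fun p _ => hlow p) (by linarith [min_le_right s 0])
  have hsplit : s - i = (max s 0 - max i 0) + (min s 0 - min i 0) := by
    linarith [min_add_max s 0, min_add_max i 0]
  rw [hsplit]
  linarith

theorem antitone_spreadWithZero {A : ℕ → Matrix ι ι ℝ} {u : ℕ → ι → ℝ}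
    (hstep : ∀ t, u (t + 1) = A t *ᵥ u t) (hA0 : ∀ t p q, 0 ≤ A t p q)
    (hA1 : ∀ t p, ∑ q, A t p q ≤ 1) : Antitone fun t => spreadWithZero (u t) :=
  antitone_nat_of_succ_le fun t => by
    simpa [hstep] using
      spreadWithZero_mulVec_le (u := u t) (hA0 t) (fun _ _ => le_rfl) (hA1 t) (hA0 t) le_rfl

theorem tendsto_spread_zero_of_window [DecidableEq ι] {A K : ℕ → Matrix ι ι ℝ}
    {u : ℕ → ι → ℝ} {L : ℕ} {η : ℝ} (hstep : ∀ t, u (t + 1) = A t *ᵥ u t)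
    (hA0 : ∀ t p q, 0 ≤ A t p q) (hAK : ∀ t p q, A t p q ≤ K t p q)
    (hK : ∀ t p, ∑ q, K t p q ≤ 1) (hη : 0 < η) (hwin : ∀ t p q, η ≤ windowProd K t L p q) :
    Tendsto (fun t => spread (u t)) atTop (𝓝 0) := by
  set Φ := fun t => spreadWithZero (u t)
  have hK0 : ∀ t p q, 0 ≤ K t p q := fun t p q => (hA0 t p q).trans (hAK t p q)
  have hA1 : ∀ t p, ∑ q, A t p q ≤ 1 := fun t p => (sum_le_sum fun q _ => hAK t p q).trans (hK t p)
  have hdrop : ∀ t, η / 2 * spread (u t) ≤ Φ t - Φ (t + L) := fun t => by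
    have := spreadWithZero_mulVec_le (u := u t) (windowProd_nonneg hA0 t L)
      (windowProd_apply_le_windowProd_apply hA0 hAK t L) (sum_windowProd_apply_le_one hK0 hK t L)
      (hwin t) hη.le
    rw [← windowProd_mulVec hstep] at this
    linarith
  have hΦ : Tendsto Φ atTop (𝓝 (⨅ t, Φ t)) :=
    tendsto_atTop_ciInf (antitone_spreadWithZero hstep hA0 hA1)
      ⟨0, Set.forall_mem_range.2 fun t => spreadWithZero_nonneg _⟩
  have hgap : Tendsto (fun t => 2 / η * (Φ t - Φ (t + L))) atTop (𝓝 0) := by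
    simpa using (hΦ.sub (hΦ.comp (tendsto_add_atTop_nat L))).const_mul (2 / η)
  refine squeeze_zero (fun t => spread_nonneg _) (fun t => ?_) hgap
  rw [div_mul_eq_mul_div, le_div_iff₀ hη]
  linarith [hdrop t]

end Spread

theorem SimpleGraph.Adj.exists_walk_length_eq_two_mul {V : Type*} {G : SimpleGraph V} {v w : V}
    (h : G.Adj v w) : ∀ n, ∃ c : G.Walk v v, c.length = 2 * n
  | 0 => ⟨.nil, rfl⟩
  | n + 1 => by
    obtain ⟨c, hc⟩ := h.exists_walk_length_eq_two_mul n
    exact ⟨.cons h (.cons h.symm c), by simp [hc]; ring⟩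

/-- A closed walk of odd length lets one switch parity; back-and-forth steps along one of its
edges then reach every large length. -/
theorem SimpleGraph.Connected.eventually_exists_walk_length_eq {V : Type*} [Finite V]
    {G : SimpleGraph V} (hG : G.Connected) (hnb : ¬ G.Colorable 2) :
    ∀ᶠ n in atTop, ∀ i j, ∃ w : G.Walk i j, w.length = n := by
  obtain ⟨v, c, hc⟩ : ∃ v, ∃ c : G.Walk v v, ¬ Even c.length := by
    simpa [two_colorable_iff_forall_loop_even] using hnb
  obtain ⟨v', hvv'⟩ : ∃ v', G.Adj v v' := by
    cases c with
    | nil => simp at hc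
    | cons h _ => exact ⟨_, h⟩
  obtain ⟨k, hk⟩ := Nat.not_even_iff_odd.1 hc
  refine eventually_all.2 fun i => eventually_all.2 fun j => ?_
  obtain ⟨p⟩ := hG.preconnected i v
  obtain ⟨q⟩ := hG.preconnected v j
  filter_upwards [eventually_ge_atTop (p.length + c.length + q.length)] with n hn
  rcases Nat.even_or_odd (n - (p.length + q.length)) with ⟨m, hm⟩ | ⟨m, hm⟩
  · obtain ⟨b, hb⟩ := hvv'.exists_walk_length_eq_two_mul m
    exact ⟨p.append (b.append q), by simp only [Walk.length_append]; omega⟩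
  · obtain ⟨b, hb⟩ := hvv'.exists_walk_length_eq_two_mul (m - k)
    exact ⟨p.append (c.append (b.append q)), by simp only [Walk.length_append]; omega⟩

theorem sum_kronecker_apply_le_one {l m n p : Type*} [Fintype m] [Fintype p]
    {A : Matrix l m ℝ} {B : Matrix n p ℝ} (hA0 : ∀ i j, 0 ≤ A i j) (hA1 : ∀ i, ∑ j, A i j ≤ 1)
    (hB1 : ∀ i, ∑ j, B i j ≤ 1) (i : l × n) : ∑ j, (A ⊗ₖ B) i j ≤ 1 :=
  calc ∑ j, (A ⊗ₖ B) i j = (∑ j, A i.1 j) * ∑ j, B i.2 j := by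
        rw [Fintype.sum_prod_type, sum_mul_sum]; rfl
    _ ≤ (∑ j, A i.1 j) * 1 := by gcongr; exacts [sum_nonneg fun j _ => hA0 _ j, hB1 _]
    _ ≤ 1 := by simpa using hA1 i.1

theorem tendsto_spread_of_le_kronecker {ι V : Type*} [Fintype ι] [DecidableEq ι] [Nonempty ι]
    [Fintype V] [DecidableEq V] [Nonempty V] {r : ι → ι → Prop} (hr : ∀ a b, ReflTransGen r a b)
    {G : SimpleGraph V} (hG : G.Connected) (hGnb : ¬ G.Colorable 2)
    {W : ℕ → Matrix ι ι ℝ} {P : ℕ → Matrix V V ℝ} {ξ ε : ℝ} (hξ : 0 < ξ) (hε : 0 < ε)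
    (hW0 : ∀ t a b, 0 ≤ W t a b) (hW1 : ∀ t b, ∑ a, W t a b ≤ 1)
    (hWdiag : ∀ t a, ξ ≤ W t a a) (hWr : ∀ t a b, r a b → ξ ≤ W t a b)
    (hP0 : ∀ t i j, 0 ≤ P t i j) (hP1 : ∀ t i, ∑ j, P t i j ≤ 1)
    (hPG : ∀ t i j, G.Adj i j → ε ≤ P t i j)
    {A : ℕ → Matrix (ι × V) (ι × V) ℝ} {u : ℕ → ι × V → ℝ}
    (hstep : ∀ t, u (t + 1) = A t *ᵥ u t) (hA0 : ∀ t p q, 0 ≤ A t p q)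
    (hAK : ∀ t p q, A t p q ≤ ((W t)ᵀ ⊗ₖ P t) p q) :
    Tendsto (fun t => spread (u t)) atTop (𝓝 0) := by
  have hWT0 : ∀ t a b, 0 ≤ (W t)ᵀ a b := fun t a b => hW0 t b a
  have hWwin : ∀ᶠ L in atTop, ∀ a b t, ξ ^ L ≤ windowProd (fun t => (W t)ᵀ) t L a b :=
    eventually_all.2 fun a => eventually_all.2 fun b =>
      eventually_pow_le_windowProd (r := flip r) hWT0 hξ.le hWdiag (fun t a b h => hWr t b a h)
        (hr b a).swap
  obtain ⟨L, hLW, hLG⟩ := (hWwin.and (hG.eventually_exists_walk_length_eq hGnb)).exists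
  refine tendsto_spread_zero_of_window (L := L) (η := ξ ^ L * ε ^ L) hstep hA0 hAK
    (fun t => sum_kronecker_apply_le_one (hWT0 t) (hW1 t) (hP1 t)) (by positivity)
    fun t ⟨a, i⟩ ⟨b, j⟩ => ?_
  obtain ⟨w, rfl⟩ := hLG i j
  rw [windowProd_kronecker, kronecker_apply]
  exact mul_le_mul (hLW a b t) (pow_length_le_windowProd hP0 hε.le hPG t w) (by positivity)
    (windowProd_nonneg hWT0 t _ a b)

theorem exists_mulVec_step_of_sector {ι : Type*} [Fintype ι] [DecidableEq ι] {σ : ℝ → ℝ}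
    (hσ : σ 0 = 0 ∧ ∀ x : ℝ, x ≠ 0 → 0 ≤ σ x / x ∧ σ x / x ≤ 1) {K : ℕ → Matrix ι ι ℝ}
    {u : ℕ → ι → ℝ} (hK0 : ∀ t p q, 0 ≤ K t p q) (hstep : ∀ t, u (t + 1) = σ ∘ (K t *ᵥ u t)) :
    ∃ A : ℕ → Matrix ι ι ℝ, (∀ t, u (t + 1) = A t *ᵥ u t) ∧ (∀ t p q, 0 ≤ A t p q) ∧
      ∀ t p q, A t p q ≤ K t p q := by
  -- `σ x / x` is `0` at `x = 0`, where `σ x = 0` as well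
  have hratio : ∀ x, 0 ≤ σ x / x ∧ σ x / x ≤ 1 := fun x => by
    rcases eq_or_ne x 0 with rfl | hx
    · simp
    · exact hσ.2 x hx
  refine ⟨fun t => diagonal (fun p => σ ((K t *ᵥ u t) p) / (K t *ᵥ u t) p) * K t, fun t => ?_,
    fun t p q => ?_, fun t p q => ?_⟩
  · ext p
    rw [hstep, ← mulVec_mulVec, mulVec_diagonal, Function.comp_apply,
      div_mul_cancel_of_imp fun h => by rw [h, hσ.1]]
  · simp only [diagonal_mul]
    exact mul_nonneg (hratio _).1 (hK0 t p q)
  · simp only [diagonal_mul]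
    exact mul_le_of_le_one_left (hK0 t p q) (hratio _).2

noncomputable def attention {V : Type*} [Fintype V] (G : SimpleGraph V) [DecidableRel G.Adj]
    (e : V → V → ℝ) : Matrix V V ℝ :=
  of fun i j => if G.Adj i j then Real.exp (e i j) / ∑ k ∈ G.neighborFinset i, Real.exp (e i k)
    else 0

section Attention

variable {V : Type*} [Fintype V] {G : SimpleGraph V} [DecidableRel G.Adj] {e : V → V → ℝ}

theorem attention_nonneg (i j : V) : 0 ≤ attention G e i j := by
  unfold attention
  rw [of_apply]
  split_ifs <;> positivity

theorem sum_attention_apply_eq_one {i : V} (hi : ∃ j, G.Adj i j) : ∑ j, attention G e i j = 1 := by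
  obtain ⟨j, hj⟩ := hi
  simp only [attention, of_apply]
  rw [← sum_filter, ← G.neighborFinset_eq_filter, ← sum_div, div_self]
  exact (sum_pos (fun _ _ => Real.exp_pos _) ⟨j, G.mem_neighborFinset i j |>.2 hj⟩).ne'

theorem le_attention_of_adj {C : ℝ} {i j : V} (hC : ∀ k, |e i k| ≤ C) (hij : G.Adj i j) :
    Real.exp (-C) / (Fintype.card V * Real.exp C) ≤ attention G e i j := by
  rw [attention, of_apply, if_pos hij]
  refine div_le_div₀ (Real.exp_pos _).le (Real.exp_le_exp.2 (abs_le.1 (hC j)).1)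
    (sum_pos (fun _ _ => Real.exp_pos _) ⟨j, G.mem_neighborFinset i j |>.2 hij⟩) ?_
  calc ∑ k ∈ G.neighborFinset i, Real.exp (e i k)
      ≤ (G.neighborFinset i).card • Real.exp C :=
        sum_le_card_nsmul _ _ _ fun k _ => Real.exp_le_exp.2 (le_of_abs_le (hC k))
    _ ≤ Fintype.card V * Real.exp C := by
        rw [nsmul_eq_mul]; gcongr; exact_mod_cast card_le_univ _

end Attention

theorem exists_abs_le_of_continuous {E : Type*} [NormedAddCommGroup E] [ProperSpace E]
    {Ψ : E → E → ℝ} (hΨ : Continuous fun p : E × E => Ψ p.1 p.2) (r : ℝ) :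
    ∃ C, ∀ x y, ‖x‖ ≤ r → ‖y‖ ≤ r → |Ψ x y| ≤ C := by
  obtain ⟨C, hC⟩ := ((isCompact_closedBall (0 : E) r).prod (isCompact_closedBall 0 r))
    |>.exists_bound_of_continuousOn hΨ.continuousOn
  exact ⟨C, fun x y hx hy =>
    hC (x, y) ⟨mem_closedBall_zero_iff.2 hx, mem_closedBall_zero_iff.2 hy⟩⟩

theorem norm_mul_apply_le {m n : Type*} [Fintype n] {X : Matrix m n ℝ} {W : Matrix n n ℝ}
    {r : ℝ} (hW0 : ∀ a b, 0 ≤ W a b) (hW1 : ∀ b, ∑ a, W a b ≤ 1) (hr : 0 ≤ r) {i : m}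
    (hX : ∀ j, |X i j| ≤ r) : ‖(X * W) i‖ ≤ r := by
  refine (pi_norm_le_iff_of_nonneg hr).2 fun b => ?_
  rw [Real.norm_eq_abs, show (X * W) i b = (Wᵀ *ᵥ X i) b by rw [mulVec_transpose]; rfl]
  exact abs_mulVec_apply_le (fun a b => hW0 b a) hW1 hX b

theorem iSup_abs_sub_le_spread_vec {m n : Type*} [Fintype m] [Fintype n] [Nonempty m]
    [Nonempty n] (X : Matrix m n ℝ) :
    ⨆ i, ⨆ j, ⨆ k, ⨆ l, |X i j - X k l| ≤ spread (vec X) := by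
  have hle : ∀ i j k l, X i j - X k l ≤ spread (vec X) := fun i j k l =>
    sub_le_sub (le_sup' (vec X) (mem_univ (j, i))) (inf'_le (vec X) (mem_univ (l, k)))
  exact Real.iSup_le (fun i => Real.iSup_le (fun j => Real.iSup_le (fun k => Real.iSup_le
    (fun l => abs_sub_le_iff.2 ⟨hle i j k l, hle k l i j⟩) (spread_nonneg _))
    (spread_nonneg _)) (spread_nonneg _)) (spread_nonneg _)

theorem stmt_16_general (N d : ℕ) (hN : 2 ≤ N) (hd : 1 ≤ d)
    (G : SimpleGraph (Fin N)) [DecidableRel G.Adj]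
    (hA1conn : G.Connected) (hA1nb : ¬ G.Colorable 2)
    (Ψ : (Fin d → ℝ) → (Fin d → ℝ) → ℝ)
    (hA2 : Continuous fun p : (Fin d → ℝ) × (Fin d → ℝ) => Ψ p.1 p.2)
    (W : ℕ → Matrix (Fin d) (Fin d) ℝ) (σ : ℝ → ℝ)
    (X : ℕ → Matrix (Fin N) (Fin d) ℝ)
    (P : ℕ → Matrix (Fin N) (Fin N) ℝ)
    (hP : ∀ t i j, P t i j =
      if G.Adj i j then
        Real.exp (Ψ ((X t * W t) i) ((X t * W t) j)) /
          ∑ k ∈ G.neighborFinset i, Real.exp (Ψ ((X t * W t) i) ((X t * W t) k))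
      else 0)
    (hdyn : ∀ t, X (t + 1) = (P t * X t * W t).map σ)
    (hA3' : (∀ t, (∀ i j, 0 ≤ W t i j) ∧ ∀ j, ∑ i, W t i j ≤ 1) ∧
      ∃ ξ : ℝ, 0 < ξ ∧ ξ < 1 ∧ ∀ t,
        (∀ i, ξ ≤ W t i i) ∧
        ∀ i j, i ≠ j → 0 < W t i j → ξ ≤ W t i j ∧ ξ ≤ W t j i)
    (hA4 : σ 0 = 0 ∧ ∀ x : ℝ, x ≠ 0 → 0 ≤ σ x / x ∧ σ x / x ≤ 1)
    -- 𝒢′: a fixed undirected graph on {1,…,d}, with a self-loop at every vertex,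
    -- connected, whose edges are exactly the positivity pattern of every W^(t):
    (r : Fin d → Fin d → Prop)
    (hGconn : ∀ i j, Relation.ReflTransGen r i j)
    (hpattern : ∀ t i j, 0 < W t i j ↔ r i j) :
    Tendsto (fun t => ⨆ i : Fin N, ⨆ j : Fin d, ⨆ k : Fin N, ⨆ l : Fin d,
      |X t i j - X t k l|) atTop (nhds 0) := by
  obtain ⟨hW, ξ, hξ, -, hWξ⟩ := hA3'
  have : Nontrivial (Fin N) := Fin.nontrivial_iff_two_le.2 hN
  have : NeZero d := ⟨by omega⟩
  have hPatt : ∀ t, P t = attention G fun i j => Ψ ((X t * W t) i) ((X t * W t) j) :=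
    fun t => Matrix.ext (hP t)
  have hP0 : ∀ t i j, 0 ≤ P t i j := fun t i j => hPatt t ▸ attention_nonneg i j
  have hP1 : ∀ t i, ∑ j, P t i j ≤ 1 := fun t i =>
    (hPatt t ▸ sum_attention_apply_eq_one (hA1conn.preconnected.exists_adj_of_nontrivial i)).le
  have hWr : ∀ t a b, r a b → ξ ≤ W t a b := fun t a b hab => by
    rcases eq_or_ne a b with rfl | hne
    · exact (hWξ t).1 a
    · exact ((hWξ t).2 a b hne ((hpattern t a b).2 hab)).1
  obtain ⟨A, hstep, hA0, hAK⟩ := exists_mulVec_step_of_sector (u := fun t => vec (X t))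
    (K := fun t => (W t)ᵀ ⊗ₖ P t) hA4 (fun t p q => mul_nonneg ((hW t).1 _ _) (hP0 t _ _))
    fun t => by rw [hdyn, vec_map, kronecker_mulVec_vec, transpose_transpose]
  have hX : ∀ t i j, |X t i j| ≤ ‖vec (X 0)‖ := fun t i j =>
    abs_apply_le_of_mulVec_step (u := fun t => vec (X t)) hstep hA0 (fun t p =>
      (sum_le_sum fun q _ => hAK t p q).trans
        (sum_kronecker_apply_le_one (fun a b => (hW t).1 b a) (hW t).2 (hP1 t) p))
      (norm_le_pi_norm (vec (X 0))) t (j, i)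
  have hXW : ∀ t i, ‖(X t * W t) i‖ ≤ ‖vec (X 0)‖ := fun t i =>
    norm_mul_apply_le (hW t).1 (hW t).2 (norm_nonneg _) (hX t i)
  obtain ⟨C, hC⟩ := exists_abs_le_of_continuous hA2 ‖vec (X 0)‖
  refine squeeze_zero (fun t => Real.iSup_nonneg fun i => Real.iSup_nonneg fun j =>
      Real.iSup_nonneg fun k => Real.iSup_nonneg fun l => abs_nonneg _)
    (fun t => iSup_abs_sub_le_spread_vec (X t))
    (tendsto_spread_of_le_kronecker hGconn hA1conn hA1nb hξ
      (by positivity : 0 < Real.exp (-C) / (Fintype.card (Fin N) * Real.exp C))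
      (fun t => (hW t).1) (fun t => (hW t).2) (fun t => (hWξ t).1) hWr hP0 hP1
      (fun t i j hij => hPatt t ▸ le_attention_of_adj
        (fun k => hC _ _ (hXW t i) (hXW t k)) hij) hstep hA0 hAK)

/-- under (A1), (A2), (A3′), (A4), if the sparsity pattern of all W^(t)
is a fixed connected graph 𝒢′ on {1,…,d} with self-loops at every vertex, then all
Nd entries of X^(t) converge to a single common value. -/
theorem stmt_16 (N d : ℕ) (hN : 2 ≤ N) (hd : 1 ≤ d)
    (G : SimpleGraph (Fin N)) [DecidableRel G.Adj]
    (hA1conn : G.Connected) (hA1nb : ¬ G.Colorable 2)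
    (Ψ : (Fin d → ℝ) → (Fin d → ℝ) → ℝ)
    (hA2 : Continuous fun p : (Fin d → ℝ) × (Fin d → ℝ) => Ψ p.1 p.2)
    (W : ℕ → Matrix (Fin d) (Fin d) ℝ) (σ : ℝ → ℝ)
    (X : ℕ → Matrix (Fin N) (Fin d) ℝ)
    (P : ℕ → Matrix (Fin N) (Fin N) ℝ)
    (hP : ∀ t i j, P t i j =
      if G.Adj i j then
        Real.exp (Ψ ((X t * W t) i) ((X t * W t) j)) /
          ∑ k ∈ G.neighborFinset i, Real.exp (Ψ ((X t * W t) i) ((X t * W t) k))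
      else 0)
    (hdyn : ∀ t, X (t + 1) = (P t * X t * W t).map σ)
    (hA3' : (∀ t, (∀ i j, 0 ≤ W t i j) ∧ ∀ j, ∑ i, W t i j ≤ 1) ∧
      ∃ ξ : ℝ, 0 < ξ ∧ ξ < 1 ∧ ∀ t,
        (∀ i, ξ ≤ W t i i) ∧
        ∀ i j, i ≠ j → 0 < W t i j → ξ ≤ W t i j ∧ ξ ≤ W t j i)
    (hA4 : σ 0 = 0 ∧ ∀ x : ℝ, x ≠ 0 → 0 ≤ σ x / x ∧ σ x / x ≤ 1)
    -- 𝒢′: a fixed undirected graph on {1,…,d}, with a self-loop at every vertex,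
    -- connected, whose edges are exactly the positivity pattern of every W^(t):
    (r : Fin d → Fin d → Prop)
    (hsym : ∀ i j, r i j → r j i) (hrefl : ∀ i, r i i)
    (hGconn : ∀ i j, Relation.ReflTransGen r i j)
    (hpattern : ∀ t i j, 0 < W t i j ↔ r i j) :
    Tendsto (fun t => ⨆ i : Fin N, ⨆ j : Fin d, ⨆ k : Fin N, ⨆ l : Fin d,
      |X t i j - X t k l|) atTop (nhds 0) :=
  stmt_16_general N d hN hd G hA1conn hA1nb Ψ hA2 W σ X P hP hdyn hA3' hA4 r hGconn hpattern
end

section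
/- Let G be connected and non-bipartite with adjacency matrix A ∈ {0,1}^{N×N} and degree matrix D_deg := Diag(A1), and let 0 < ε ≤ 1/d_max where d_max is the maximum vertex degree of G (equivalently, 𝒫_{G,ε} is nonempty). Let λ be the second largest eigenvalue (counted with multiplicity) of the symmetric matrix D_deg^{−1/2} A D_deg^{−1/2}. Then λ ≤ JSR(𝒫̃_{G,ε}). -/
open Matrix Filter

/-!
Take the simple random walk `P = D⁻¹A`; the bound `ε ≤ 1 / d_max` puts it in `𝒫_{G,ε}`, so it
suffices to show `λ ^ k ≤ √N ‖(BPBᵀ)ᵏ‖_F` for all `k` (when `λ ≥ 0`). Put `v = D^{1/2} 1`; then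
`S v = v` and `Pᵀ D^{1/2} = D^{1/2} S`. In the span of orthonormal eigenvectors of `S` for its two
largest eigenvalues `μ ≥ λ` choose `w ≠ 0` with `v ⬝ w = 0`; as `μ ≥ λ ≥ 0`, `‖Sᵏ w‖ ≥ λᵏ ‖w‖`. The
vectors `z_k = D^{1/2} Sᵏ w` have coordinate sum `v ⬝ Sᵏ w = v ⬝ w = 0` and satisfy
`Pᵀ z_k = z_{k+1}`. As `BᵀB` is the projection onto `1ᗮ`, `B` is an isometry there and
`(BPBᵀ)ᵀᵏ (B z_0) = B z_k`; since `1 ≤ d_i ≤ N`, this gives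
`λᵏ ‖w‖ ≤ ‖z_k‖ ≤ ‖(BPBᵀ)ᵏ‖_F ‖z_0‖ ≤ √N ‖(BPBᵀ)ᵏ‖_F ‖w‖`.
-/

section FrobeniusNorm

open scoped Matrix.Norms.Frobenius

variable {m n : ℕ}

theorem frobNorm_eq_norm (X : Matrix (Fin m) (Fin n) ℝ) : frobNorm X = ‖X‖ := by
  simp [frobNorm, frobenius_norm_def, Real.sqrt_eq_rpow, one_div]

theorem frobNorm_nonneg (X : Matrix (Fin m) (Fin n) ℝ) : 0 ≤ frobNorm X :=
  Real.sqrt_nonneg _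

theorem sq_frobNorm (X : Matrix (Fin m) (Fin n) ℝ) :
    frobNorm X ^ 2 = ∑ i, ∑ j, X i j ^ 2 :=
  Real.sq_sqrt (by positivity)

theorem frobNorm_transpose (X : Matrix (Fin m) (Fin n) ℝ) : frobNorm Xᵀ = frobNorm X := by
  simp only [frobNorm_eq_norm, frobenius_norm_transpose]

theorem frobNorm_mul_mul_transpose_le (X : Matrix (Fin m) (Fin n) ℝ)
    (P : Matrix (Fin n) (Fin n) ℝ) : frobNorm (X * P * Xᵀ) ≤ frobNorm X ^ 2 * frobNorm P := by
  simp only [frobNorm_eq_norm]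
  grw [frobenius_norm_mul, frobenius_norm_mul, frobenius_norm_transpose]
  exact le_of_eq (by ring)

theorem frobNorm_list_ofFn_prod_le {k : ℕ} (hk : k ≠ 0) (M : Fin k → Matrix (Fin n) (Fin n) ℝ)
    {c : ℝ} (hM : ∀ i, frobNorm (M i) ≤ c) : frobNorm (List.ofFn M).prod ≤ c ^ k := by
  have hne : List.ofFn M ≠ [] := by simpa using hk
  calc frobNorm (List.ofFn M).prod ≤ ∏ i, frobNorm (M i) := by
        simpa [frobNorm_eq_norm, List.prod_ofFn] using List.norm_prod_le' hne
    _ ≤ ∏ _i : Fin k, c := Finset.prod_le_prod (fun i _ => frobNorm_nonneg _) fun i _ => hM i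
    _ = c ^ k := by simp

end FrobeniusNorm

theorem dotProduct_mulVec_self_le {m n : ℕ} (M : Matrix (Fin m) (Fin n) ℝ) (x : Fin n → ℝ) :
    (M *ᵥ x) ⬝ᵥ (M *ᵥ x) ≤ frobNorm M ^ 2 * (x ⬝ᵥ x) := by
  simp only [sq_frobNorm, dotProduct, ← sq]
  rw [Finset.sum_mul]
  gcongr with i
  simpa [mulVec, dotProduct] using Finset.sum_mul_sq_le_sq_mul_sq Finset.univ (M i) x

theorem frobNorm_le_sqrt_of_rowStochastic {N : ℕ} {P : Matrix (Fin N) (Fin N) ℝ}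
    (hP : rowStochastic P) : frobNorm P ≤ √N := by
  refine Real.sqrt_le_sqrt ?_
  calc ∑ i, ∑ j, P i j ^ 2 ≤ ∑ i, ∑ j, P i j := by
        gcongr with i _ j _
        refine pow_le_of_le_one (hP.1 i j) ?_ two_ne_zero
        exact hP.2 i ▸ Finset.single_le_sum (fun k _ => hP.1 i k) (Finset.mem_univ j)
    _ = N := by simp [hP.2]

section JointSpectralRadius

open Topology

variable {n : ℕ} {A : Set (Matrix (Fin n) (Fin n) ℝ)}

def jsrNorms (A : Set (Matrix (Fin n) (Fin n) ℝ)) (k : ℕ) : Set ℝ :=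
  {x : ℝ | ∃ M : Fin k → Matrix (Fin n) (Fin n) ℝ,
    (∀ i, M i ∈ A) ∧ x = frobNorm (List.ofFn M).prod ^ (k : ℝ)⁻¹}

theorem JSR_eq_limsup_sSup_jsrNorms (A : Set (Matrix (Fin n) (Fin n) ℝ)) :
    JSR A = limsup (fun k => sSup (jsrNorms A k)) atTop :=
  rfl

theorem le_of_mem_jsrNorms {c : ℝ} (hc : 1 ≤ c) (hA : ∀ Q ∈ A, frobNorm Q ≤ c) {k : ℕ} {x : ℝ}
    (hx : x ∈ jsrNorms A k) : x ≤ c := by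
  obtain ⟨M, hM, rfl⟩ := hx
  rcases eq_or_ne k 0 with rfl | hk
  · simpa using hc
  calc frobNorm (List.ofFn M).prod ^ (k : ℝ)⁻¹ ≤ (c ^ k) ^ (k : ℝ)⁻¹ := by
        gcongr
        · exact frobNorm_nonneg _
        · exact frobNorm_list_ofFn_prod_le hk M fun i => hA _ (hM i)
    _ = c := Real.pow_rpow_inv_natCast (by linarith) hk

theorem frobNorm_pow_rpow_mem_jsrNorms {T : Matrix (Fin n) (Fin n) ℝ} (hT : T ∈ A) (k : ℕ) :
    frobNorm (T ^ k) ^ (k : ℝ)⁻¹ ∈ jsrNorms A k :=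
  ⟨fun _ => T, fun _ => hT, by rw [List.ofFn_const, List.prod_replicate]⟩

theorem le_JSR_of_pow_le {c C lam : ℝ} {T : Matrix (Fin n) (Fin n) ℝ} (hT : T ∈ A)
    (hA : ∀ Q ∈ A, frobNorm Q ≤ c) (hlam : 0 ≤ lam) (hC : 0 < C)
    (hpow : ∀ᶠ k in atTop, lam ^ k ≤ C * frobNorm (T ^ k)) : lam ≤ JSR A := by
  have hA' : ∀ Q ∈ A, frobNorm Q ≤ max c 1 := fun Q hQ => (hA Q hQ).trans (le_max_left _ _)
  have hmem_le (k : ℕ) : ∀ x ∈ jsrNorms A k, x ≤ max c 1 :=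
    fun _ hx => le_of_mem_jsrNorms (le_max_right _ _) hA' hx
  have hbdd (k : ℕ) : BddAbove (jsrNorms A k) := ⟨max c 1, hmem_le k⟩
  have hCk : Tendsto (fun k : ℕ => C⁻¹ ^ (k : ℝ)⁻¹) atTop (𝓝 1) := by
    simpa [Function.comp_def] using
      (Real.continuousAt_const_rpow (inv_ne_zero hC.ne')).tendsto.comp
        (tendsto_inv_atTop_zero.comp tendsto_natCast_atTop_atTop)
  have hlim : Tendsto (fun k : ℕ => lam * C⁻¹ ^ (k : ℝ)⁻¹) atTop (𝓝 lam) := by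
    simpa using hCk.const_mul lam
  have hle : ∀ᶠ k : ℕ in atTop, lam * C⁻¹ ^ (k : ℝ)⁻¹ ≤ sSup (jsrNorms A k) := by
    filter_upwards [hpow, eventually_ne_atTop 0] with k hk hk0
    calc lam * C⁻¹ ^ (k : ℝ)⁻¹ = (lam ^ k * C⁻¹) ^ (k : ℝ)⁻¹ := by
          rw [Real.mul_rpow (by positivity) (by positivity), Real.pow_rpow_inv_natCast hlam hk0]
      _ ≤ frobNorm (T ^ k) ^ (k : ℝ)⁻¹ := by
          gcongr
          rwa [← div_eq_mul_inv, div_le_iff₀' hC]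
      _ ≤ sSup (jsrNorms A k) := le_csSup (hbdd k) (frobNorm_pow_rpow_mem_jsrNorms hT k)
  rw [JSR_eq_limsup_sSup_jsrNorms, ← hlim.limsup_eq]
  exact limsup_le_limsup hle hlim.isCoboundedUnder_le <| isBoundedUnder_of
    ⟨max c 1, fun k => Real.sSup_le (hmem_le k) (zero_le_one.trans (le_max_right _ _))⟩

theorem zero_le_JSR {c : ℝ} {T : Matrix (Fin n) (Fin n) ℝ} (hT : T ∈ A)
    (hA : ∀ Q ∈ A, frobNorm Q ≤ c) : 0 ≤ JSR A :=
  le_JSR_of_pow_le hT hA le_rfl one_pos <| (eventually_ne_atTop 0).mono fun k hk => by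
    simpa [zero_pow hk] using frobNorm_nonneg _

end JointSpectralRadius

section RowOrthonormal

variable {m n : ℕ} {B : Matrix (Fin m) (Fin n) ℝ}

/-- Completing `B` by the unit row `1/√n` gives an orthogonal matrix. -/
theorem transpose_mul_self_eq_projJ (hmn : m + 1 = n) (hB1 : B * Bᵀ = 1)
    (hB2 : B *ᵥ (fun _ => (1 : ℝ)) = 0) : Bᵀ * B = projJ n := by
  have hn : (0 : ℝ) < n := by norm_cast; omega
  set R : Matrix (Fin 1) (Fin n) ℝ := of fun _ _ => (√n)⁻¹
  have hBR : B * Rᵀ = 0 := by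
    ext a b
    simpa [R, mul_apply, ← Finset.sum_mul, mulVec, dotProduct] using
      Or.inl (congrFun hB2 a)
  have hRR : R * Rᵀ = 1 := by
    ext a b
    obtain rfl := Subsingleton.elim a b
    simp [R, mul_apply, ← mul_inv, hn.le, hn.ne']
  have hRtR : Rᵀ * R = (n : ℝ)⁻¹ • of fun _ _ => (1 : ℝ) := by
    ext a b
    simp [R, mul_apply, ← mul_inv, hn.le]
  have hCC : fromRows B R * fromCols Bᵀ Rᵀ = 1 := by
    rw [fromRows_mul_fromCols, hB1, hBR, ← transpose_transpose (R * Bᵀ), transpose_mul,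
      transpose_transpose, hBR, transpose_zero, hRR, fromBlocks_one]
  have e : Fin n ≃ Fin m ⊕ Fin 1 := (finCongr hmn.symm).trans finSumFinEquiv.symm
  have hCtC := (fromCols_mul_fromRows_eq_one_comm e Bᵀ Rᵀ B R).mpr hCC
  rw [fromCols_mul_fromRows, hRtR] at hCtC
  rw [projJ, ← hCtC, add_sub_cancel_right]

theorem projJ_mulVec_of_sum_eq_zero {x : Fin n → ℝ} (hx : ∑ i, x i = 0) : projJ n *ᵥ x = x := by
  rw [projJ, sub_mulVec, one_mulVec, sub_eq_self]
  ext i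
  simp [mulVec, dotProduct, ← Finset.mul_sum, hx]

theorem dotProduct_mulVec_self_of_sum_eq_zero (hB : Bᵀ * B = projJ n) {x : Fin n → ℝ}
    (hx : ∑ i, x i = 0) : (B *ᵥ x) ⬝ᵥ (B *ᵥ x) = x ⬝ᵥ x := by
  rw [dotProduct_mulVec, ← mulVec_transpose, mulVec_mulVec, hB, projJ_mulVec_of_sum_eq_zero hx]

theorem pow_mulVec_mulVec_eq (hB : Bᵀ * B = projJ n) {M : Matrix (Fin n) (Fin n) ℝ}
    {z : ℕ → Fin n → ℝ} (hz : ∀ k, ∑ i, z k i = 0) (hM : ∀ k, M *ᵥ z k = z (k + 1)) (k : ℕ) :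
    (B * M * Bᵀ) ^ k *ᵥ (B *ᵥ z 0) = B *ᵥ z k := by
  induction k with
  | zero => simp
  | succ k ih =>
    rw [pow_succ', ← mulVec_mulVec, ih, mulVec_mulVec, Matrix.mul_assoc, Matrix.mul_assoc, hB,
      ← mulVec_mulVec, ← mulVec_mulVec, projJ_mulVec_of_sum_eq_zero (hz k), hM]

end RowOrthonormal

section Growth

variable {n : ℕ} {S : Matrix (Fin n) (Fin n) ℝ}

theorem pow_mulVec_eq_pow_smul {x : Fin n → ℝ} {μ : ℝ} (h : S *ᵥ x = μ • x) (k : ℕ) :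
    S ^ k *ᵥ x = μ ^ k • x := by
  induction k with
  | zero => simp
  | succ k ih => rw [pow_succ, ← mulVec_mulVec, h, mulVec_smul, ih, smul_smul, ← pow_succ']

theorem exists_dotProduct_eq_zero_pow_growth {x y : Fin n → ℝ} {μ lam : ℝ}
    (hx : S *ᵥ x = μ • x) (hy : S *ᵥ y = lam • y)
    (hxx : x ⬝ᵥ x = 1) (hyy : y ⬝ᵥ y = 1) (hxy : x ⬝ᵥ y = 0)
    (hlam : 0 ≤ lam) (hlamμ : lam ≤ μ) (v : Fin n → ℝ) :
    ∃ w : Fin n → ℝ, 0 < w ⬝ᵥ w ∧ v ⬝ᵥ w = 0 ∧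
      ∀ k : ℕ, (lam ^ k) ^ 2 * (w ⬝ᵥ w) ≤ (S ^ k *ᵥ w) ⬝ᵥ (S ^ k *ᵥ w) := by
  have hnorm (a b : ℝ) : (a • x + b • y) ⬝ᵥ (a • x + b • y) = a ^ 2 + b ^ 2 := by
    simp only [add_dotProduct, dotProduct_add, smul_dotProduct, dotProduct_smul,
      dotProduct_comm y x, hxx, hyy, hxy, smul_eq_mul]
    ring
  obtain ⟨a, b, hab, hv⟩ : ∃ a b : ℝ, 0 < a ^ 2 + b ^ 2 ∧ v ⬝ᵥ (a • x + b • y) = 0 := by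
    by_cases hvy : v ⬝ᵥ y = 0
    · exact ⟨0, 1, by norm_num, by simp [hvy]⟩
    · refine ⟨v ⬝ᵥ y, -(v ⬝ᵥ x), by positivity, ?_⟩
      simp only [dotProduct_add, dotProduct_smul, smul_eq_mul]
      ring
  refine ⟨a • x + b • y, by rwa [hnorm], hv, fun k => ?_⟩
  have hSk : S ^ k *ᵥ (a • x + b • y) = (a * μ ^ k) • x + (b * lam ^ k) • y := by
    rw [mulVec_add, mulVec_smul, mulVec_smul, pow_mulVec_eq_pow_smul hx,
      pow_mulVec_eq_pow_smul hy, smul_smul, smul_smul]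
  have hpow : (lam ^ k) ^ 2 ≤ (μ ^ k) ^ 2 := by gcongr
  rw [hSk, hnorm, hnorm]
  nlinarith [mul_le_mul_of_nonneg_left hpow (sq_nonneg a)]

theorem Matrix.IsHermitian.dotProduct_eigenvectorBasis {n : ℕ} {A : Matrix (Fin n) (Fin n) ℝ}
    (hA : A.IsHermitian) (i j : Fin n) :
    ⇑(hA.eigenvectorBasis i) ⬝ᵥ ⇑(hA.eigenvectorBasis j) = if i = j then 1 else 0 := by
  rw [← orthonormal_iff_ite.1 hA.eigenvectorBasis.orthonormal i j,
    EuclideanSpace.inner_eq_star_dotProduct]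
  simp [dotProduct_comm]

theorem pow_le_sqrt_mul_frobNorm_pow {m : ℕ} {B : Matrix (Fin m) (Fin n) ℝ}
    {P : Matrix (Fin n) (Fin n) ℝ} {v w : Fin n → ℝ} {c lam : ℝ}
    (hB : Bᵀ * B = projJ n) (hS : S.IsSymm) (hSv : S *ᵥ v = v)
    (hPS : diagonal v * S = Pᵀ * diagonal v)
    (hv1 : ∀ i, 1 ≤ v i ^ 2) (hvc : ∀ i, v i ^ 2 ≤ c) (hw : 0 < w ⬝ᵥ w) (hvw : v ⬝ᵥ w = 0)
    (hgrow : ∀ k : ℕ, (lam ^ k) ^ 2 * (w ⬝ᵥ w) ≤ (S ^ k *ᵥ w) ⬝ᵥ (S ^ k *ᵥ w)) (k : ℕ) :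
    lam ^ k ≤ √c * frobNorm ((B * P * Bᵀ) ^ k) := by
  set z : ℕ → Fin n → ℝ := fun k => diagonal v *ᵥ (S ^ k *ᵥ w)
  have hsq (x : Fin n → ℝ) :
      (diagonal v *ᵥ x) ⬝ᵥ (diagonal v *ᵥ x) = ∑ i, v i ^ 2 * x i ^ 2 := by
    simp only [dotProduct, mulVec_diagonal]
    ring_nf
  have hz (k : ℕ) : ∑ i, z k i = 0 := by
    have hSkv : (S ^ k)ᵀ *ᵥ v = v := by
      rw [transpose_pow, hS.eq, pow_mulVec_eq_pow_smul (μ := 1) (by simpa using hSv), one_pow,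
        one_smul]
    calc ∑ i, z k i = v ⬝ᵥ (S ^ k *ᵥ w) := by simp only [z, dotProduct, mulVec_diagonal]
      _ = 0 := by rw [dotProduct_mulVec, ← mulVec_transpose, hSkv, hvw]
  have hPz (k : ℕ) : Pᵀ *ᵥ z k = z (k + 1) := by
    have h := congrArg (· *ᵥ (S ^ k *ᵥ w)) hPS
    simp only [← mulVec_mulVec] at h
    simpa [z, pow_succ', ← mulVec_mulVec] using h.symm
  have hF : frobNorm ((B * Pᵀ * Bᵀ) ^ k) = frobNorm ((B * P * Bᵀ) ^ k) := by
    rw [← frobNorm_transpose, transpose_pow]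
    simp [transpose_mul, Matrix.mul_assoc]
  set F := frobNorm ((B * P * Bᵀ) ^ k)
  have key : (lam ^ k) ^ 2 * (w ⬝ᵥ w) ≤ (c * F ^ 2) * (w ⬝ᵥ w) := calc
    (lam ^ k) ^ 2 * (w ⬝ᵥ w) ≤ (S ^ k *ᵥ w) ⬝ᵥ (S ^ k *ᵥ w) := hgrow k
    _ ≤ z k ⬝ᵥ z k := by
      rw [hsq]
      simp only [dotProduct, ← sq]
      gcongr with i
      exact le_mul_of_one_le_left (sq_nonneg _) (hv1 i)
    _ = (B *ᵥ z k) ⬝ᵥ (B *ᵥ z k) := (dotProduct_mulVec_self_of_sum_eq_zero hB (hz k)).symm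
    _ ≤ F ^ 2 * ((B *ᵥ z 0) ⬝ᵥ (B *ᵥ z 0)) := by
      rw [← pow_mulVec_mulVec_eq hB hz hPz k, ← hF]
      exact dotProduct_mulVec_self_le _ _
    _ = F ^ 2 * (z 0 ⬝ᵥ z 0) := by rw [dotProduct_mulVec_self_of_sum_eq_zero hB (hz 0)]
    _ ≤ F ^ 2 * (c * (w ⬝ᵥ w)) := by
      gcongr
      simp only [z, pow_zero, one_mulVec]
      rw [hsq]
      simp only [dotProduct, Finset.mul_sum, ← sq]
      gcongr with i
      exact hvc i
    _ = (c * F ^ 2) * (w ⬝ᵥ w) := by ring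
  have hsq_le : (lam ^ k) ^ 2 ≤ c * F ^ 2 := le_of_mul_le_mul_right key hw
  calc lam ^ k ≤ √(c * F ^ 2) := Real.le_sqrt_of_sq_le hsq_le
    _ = √c * F := by rw [Real.sqrt_mul' c (sq_nonneg F), Real.sqrt_sq (frobNorm_nonneg _)]

end Growth

namespace SimpleGraph

section

variable {V : Type*} [Fintype V] (G : SimpleGraph V) [DecidableRel G.Adj]

noncomputable def sqrtDegree (i : V) : ℝ := √(G.degree i)

variable {G}

theorem sq_sqrtDegree (i : V) : G.sqrtDegree i ^ 2 = G.degree i :=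
  Real.sq_sqrt (Nat.cast_nonneg _)

theorem sqrtDegree_pos_of_adj {i j : V} (h : G.Adj i j) : 0 < G.sqrtDegree i :=
  Real.sqrt_pos.2 (Nat.cast_pos.2 h.degree_pos_left)

variable [DecidableEq V] (G)

noncomputable def normalizedAdjMatrix : Matrix V V ℝ :=
  diagonal (fun i => (G.sqrtDegree i)⁻¹) * G.adjMatrix ℝ * diagonal (fun i => (G.sqrtDegree i)⁻¹)

noncomputable def randomWalkMatrix : Matrix V V ℝ :=
  diagonal (fun i => (G.degree i : ℝ)⁻¹) * G.adjMatrix ℝ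

theorem normalizedAdjMatrix_mulVec_sqrtDegree :
    G.normalizedAdjMatrix *ᵥ G.sqrtDegree = G.sqrtDegree := by
  ext i
  have hsum : ∑ j ∈ G.neighborFinset i, (G.sqrtDegree j)⁻¹ * G.sqrtDegree j = G.degree i := by
    rw [← card_neighborFinset_eq_degree, Finset.cast_card]
    refine Finset.sum_congr rfl fun j hj => inv_mul_cancel₀ ?_
    exact (sqrtDegree_pos_of_adj ((G.mem_neighborFinset i j).1 hj).symm).ne'
  simp only [normalizedAdjMatrix, ← mulVec_mulVec, mulVec_diagonal, adjMatrix_mulVec_apply, hsum]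
  rw [sqrtDegree, inv_mul_eq_div, Real.div_sqrt]

theorem diagonal_sqrtDegree_mul_normalizedAdjMatrix :
    diagonal G.sqrtDegree * G.normalizedAdjMatrix =
      G.randomWalkMatrixᵀ * diagonal G.sqrtDegree := by
  ext i j
  simp only [normalizedAdjMatrix, randomWalkMatrix, diagonal_mul, mul_diagonal, transpose_apply,
    adjMatrix_apply, G.adj_comm j i]
  split_ifs with h
  · have hi := sqrtDegree_pos_of_adj h
    have hj := sqrtDegree_pos_of_adj h.symm
    rw [← sq_sqrtDegree j]
    field_simp
  · simp

end

theorem randomWalkMatrix_mem_Pset {N : ℕ} {G : SimpleGraph (Fin N)} [DecidableRel G.Adj] {ε : ℝ}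
    (hdeg : ∀ i, 0 < G.degree i) (hε : ∀ i, ε * G.degree i ≤ 1) :
    G.randomWalkMatrix ∈ Pset G ε := by
  have hd (i : Fin N) : (0 : ℝ) < G.degree i := Nat.cast_pos.2 (hdeg i)
  have happ (i j : Fin N) :
      G.randomWalkMatrix i j = if G.Adj i j then (G.degree i : ℝ)⁻¹ else 0 := by
    simp only [randomWalkMatrix, diagonal_mul, adjMatrix_apply, mul_ite, mul_one, mul_zero]
  refine ⟨⟨fun i j => ?_, fun i => ?_⟩, fun i j h => ?_, fun i j h => ?_⟩
  · rw [happ]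
    split_ifs <;> positivity
  · simp [happ, Finset.sum_ite, ← neighborFinset_eq_filter, (hd i).ne']
  · rw [happ, if_pos h]
    exact ⟨by rw [← one_div, le_div_iff₀ (hd i)]; exact hε i,
      inv_le_one_of_one_le₀ (by exact_mod_cast hdeg i)⟩
  · rw [happ, if_neg h]

theorem eigenvalues_le_JSR {N m : ℕ} {G : SimpleGraph (Fin N)} [DecidableRel G.Adj]
    (hconn : G.Connected) {ε : ℝ} (hε : ∀ i, ε * G.degree i ≤ 1) {B : Matrix (Fin m) (Fin N) ℝ}
    (hB : Bᵀ * B = projJ N) (hS : G.normalizedAdjMatrix.IsHermitian) {i j : Fin N} (hij : i ≠ j)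
    (hji : hS.eigenvalues j ≤ hS.eigenvalues i) :
    hS.eigenvalues j ≤ JSR {Q : Matrix (Fin m) (Fin m) ℝ | ∃ P ∈ Pset G ε, Q = B * P * Bᵀ} := by
  have : Nontrivial (Fin N) := nontrivial_of_ne i j hij
  have hdeg (k : Fin N) : 0 < G.degree k := hconn.preconnected.degree_pos_of_nontrivial k
  have hT : B * G.randomWalkMatrix * Bᵀ ∈ {Q | ∃ P ∈ Pset G ε, Q = B * P * Bᵀ} :=
    ⟨_, randomWalkMatrix_mem_Pset hdeg hε, rfl⟩
  have hA : ∀ Q ∈ {Q | ∃ P ∈ Pset G ε, Q = B * P * Bᵀ}, frobNorm Q ≤ frobNorm B ^ 2 * √N := by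
    rintro _ ⟨P, hP, rfl⟩
    grw [frobNorm_mul_mul_transpose_le, frobNorm_le_sqrt_of_rowStochastic hP.1]
  rcases lt_or_ge (hS.eigenvalues j) 0 with hneg | hnonneg
  · exact hneg.le.trans (zero_le_JSR hT hA)
  obtain ⟨w, hw, hvw, hgrow⟩ := exists_dotProduct_eq_zero_pow_growth
    (hS.mulVec_eigenvectorBasis i) (hS.mulVec_eigenvectorBasis j)
    (by simp [hS.dotProduct_eigenvectorBasis]) (by simp [hS.dotProduct_eigenvectorBasis])
    (by simp [hS.dotProduct_eigenvectorBasis, hij]) hnonneg hji G.sqrtDegree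
  have hdegN (k : Fin N) : (G.degree k : ℝ) ≤ N := by
    exact_mod_cast (Fintype.card_fin N ▸ G.degree_lt_card_verts k).le
  refine le_JSR_of_pow_le hT hA hnonneg (C := √N) (Real.sqrt_pos.2 (by simp [i.pos]))
    (.of_forall fun k => ?_)
  exact pow_le_sqrt_mul_frobNorm_pow hB (isHermitian_iff_isSymm.1 hS)
    G.normalizedAdjMatrix_mulVec_sqrtDegree G.diagonal_sqrtDegree_mul_normalizedAdjMatrix
    (fun k => by rw [sq_sqrtDegree]; exact_mod_cast hdeg k)
    (fun k => by rw [sq_sqrtDegree]; exact hdegN k) hw hvw hgrow k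

end SimpleGraph

theorem stmt_17_general (N : ℕ) (hN : 2 ≤ N) (G : SimpleGraph (Fin N)) [DecidableRel G.Adj]
    (hconn : G.Connected)
    (ε : ℝ) (hεdmax : ∀ i, ε * (G.degree i : ℝ) ≤ 1)
    (B : Matrix (Fin (N - 1)) (Fin N) ℝ)
    (hB1 : B * Bᵀ = 1) (hB2 : B *ᵥ (fun _ => (1 : ℝ)) = 0)
    (S : Matrix (Fin N) (Fin N) ℝ)
    (hS : S = Matrix.diagonal (fun i => (Real.sqrt (G.degree i))⁻¹) *
      (Matrix.of fun i j => if G.Adj i j then (1 : ℝ) else 0) *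
      Matrix.diagonal (fun i => (Real.sqrt (G.degree i))⁻¹))
    (hHerm : S.IsHermitian)
    (i₀ : Fin N) (hi₀ : ∀ i, hHerm.eigenvalues i ≤ hHerm.eigenvalues i₀)
    (lam : ℝ) (hlam : lam = ⨆ i : {i : Fin N // i ≠ i₀}, hHerm.eigenvalues i) :
    lam ≤ JSR {Q : Matrix (Fin (N - 1)) (Fin (N - 1)) ℝ | ∃ P ∈ Pset G ε, Q = B * P * Bᵀ} := by
  obtain rfl : S = G.normalizedAdjMatrix := hS
  have : Nontrivial (Fin N) := Fin.nontrivial_iff_two_le.2 hN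
  have : Nonempty {i : Fin N // i ≠ i₀} := let ⟨i, hi⟩ := exists_ne i₀; ⟨⟨i, hi⟩⟩
  obtain ⟨j, rfl⟩ : ∃ j : {i : Fin N // i ≠ i₀}, hHerm.eigenvalues j = lam :=
    hlam ▸ exists_eq_ciSup_of_finite
  exact SimpleGraph.eigenvalues_le_JSR hconn hεdmax
    (transpose_mul_self_eq_projJ (by omega) hB1 hB2) hHerm j.2.symm (hi₀ j)

/-- λ ≤ JSR(𝒫̃_{G,ε}), where λ is the second largest eigenvalue
(with multiplicity) of D_deg^{−1/2} A D_deg^{−1/2}. -/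
theorem stmt_17 (N : ℕ) (hN : 2 ≤ N) (G : SimpleGraph (Fin N)) [DecidableRel G.Adj]
    (hconn : G.Connected) (hnb : ¬ G.Colorable 2)
    (ε : ℝ) (hε0 : 0 < ε) (hεdmax : ∀ i, ε * (G.degree i : ℝ) ≤ 1)
    (B : Matrix (Fin (N - 1)) (Fin N) ℝ)
    (hB1 : B * Bᵀ = 1) (hB2 : B *ᵥ (fun _ => (1 : ℝ)) = 0)
    (S : Matrix (Fin N) (Fin N) ℝ)
    (hS : S = Matrix.diagonal (fun i => (Real.sqrt (G.degree i))⁻¹) *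
      (Matrix.of fun i j => if G.Adj i j then (1 : ℝ) else 0) *
      Matrix.diagonal (fun i => (Real.sqrt (G.degree i))⁻¹))
    (hHerm : S.IsHermitian)
    (i₀ : Fin N) (hi₀ : ∀ i, hHerm.eigenvalues i ≤ hHerm.eigenvalues i₀)
    (lam : ℝ) (hlam : lam = ⨆ i : {i : Fin N // i ≠ i₀}, hHerm.eigenvalues i) :
    lam ≤ JSR {Q : Matrix (Fin (N - 1)) (Fin (N - 1)) ℝ | ∃ P ∈ Pset G ε, Q = B * P * Bᵀ} :=
  stmt_17_general N hN G hconn ε hεdmax B hB1 hB2 S hS hHerm i₀ hi₀ lam hlam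
end
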